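/- For the Reversed Gompertz loss, define φ(u) = c·exp(c·u − exp(c·u)) / (1 − u) for u < 0 with constant c > 0. Then φ(u) → 0 as u → −∞, and for u < 0 sufficiently negative φ is increasing in u; hence as an instance with a noisy label becomes a more extreme outlier (u → −∞), its weight φ(u) tends to zero. -/
import Mathlib

open Real Filter

lemma rg_hasDerivAt (c u : ℝ) (hu : u < 0) :
    HasDerivAt (fun u : ℝ => c * Real.exp (c * u - Real.exp (c * u)) / (1 - u))
      ((c * ((c - c * Real.exp (c * u)) * Real.exp (c * u - Real.exp (c * u))) * (1 - u)
        - c * Real.exp (c * u - Real.exp (c * u)) * (-1)) / (1 - u) ^ 2) u := by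
  have h1 : HasDerivAt (fun u : ℝ => c * u) c u := by
    simpa using (hasDerivAt_id u).const_mul c
  have h2 : HasDerivAt (fun u : ℝ => Real.exp (c * u)) (c * Real.exp (c * u)) u := by
    simpa [mul_comm] using h1.exp
  have hg : HasDerivAt (fun u : ℝ => c * u - Real.exp (c * u)) (c - c * Real.exp (c * u)) u :=
    h1.sub h2
  have hf : HasDerivAt (fun u : ℝ => Real.exp (c * u - Real.exp (c * u)))
      ((c - c * Real.exp (c * u)) * Real.exp (c * u - Real.exp (c * u))) u := by
    simpa [mul_comm] using hg.exp
  have hnum : HasDerivAt (fun u : ℝ => c * Real.exp (c * u - Real.exp (c * u)))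
      (c * ((c - c * Real.exp (c * u)) * Real.exp (c * u - Real.exp (c * u)))) u :=
    hf.const_mul c
  have hden : HasDerivAt (fun u : ℝ => 1 - u) (-1) u := by
    simpa using (hasDerivAt_id u).const_sub 1
  exact hnum.div hden (by linarith)

/-- Robustness of the Reversed Gompertz loss (Theorem 2): the weighted parameter
`φ u = c·exp(c·u - exp(c·u)) / (1 - u)` with `c > 0` tends to `0` as `u → -∞`, and
for sufficiently negative `u` it is increasing in `u`; hence as a mislabeled instance
becomes a more extreme outlier its weight tends to zero. -/
theorem reversed_gompertz_weight_vanishes (c : ℝ) (hc : 0 < c) :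
    Filter.Tendsto
      (fun u : ℝ => c * Real.exp (c * u - Real.exp (c * u)) / (1 - u))
      Filter.atBot (nhds 0) ∧
    ∃ u₀ : ℝ, u₀ < 0 ∧ StrictMonoOn
      (fun u : ℝ => c * Real.exp (c * u - Real.exp (c * u)) / (1 - u))
      (Set.Iio u₀) := by
  constructor
  · -- squeeze between 0 and c * exp (c*u)
    have hub : Filter.Tendsto (fun u : ℝ => c * Real.exp (c * u)) atBot (nhds 0) := by
      have : Filter.Tendsto (fun u : ℝ => c * u) atBot atBot :=
        tendsto_id.const_mul_atBot hc
      simpa using ((Real.tendsto_exp_atBot.comp this).const_mul c)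
    refine squeeze_zero' ?_ ?_ hub
    · filter_upwards [eventually_le_atBot (0 : ℝ)] with u hu
      have hden : (0 : ℝ) < 1 - u := by linarith
      positivity
    · filter_upwards [eventually_le_atBot (0 : ℝ)] with u hu
      have hden : (1 : ℝ) ≤ 1 - u := by linarith
      have hE : Real.exp (c * u - Real.exp (c * u)) ≤ Real.exp (c * u) :=
        Real.exp_le_exp.2 (by have := Real.exp_nonneg (c * u); linarith)
      calc c * Real.exp (c * u - Real.exp (c * u)) / (1 - u)
          ≤ c * Real.exp (c * u - Real.exp (c * u)) := by
            apply div_le_self (by positivity) hden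
        _ ≤ c * Real.exp (c * u) := by
            exact mul_le_mul_of_nonneg_left hE hc.le
  · refine ⟨-1, by norm_num, ?_⟩
    apply StrictMonoOn.mono (s := Set.Iio 0) ?_ (by intro x hx; simp only [Set.mem_Iio] at hx ⊢; linarith)
    apply strictMonoOn_of_deriv_pos (convex_Iio 0)
    · apply ContinuousOn.div
      · fun_prop
      · fun_prop
      · intro x hx
        have : x < 0 := hx
        intro h; linarith [sub_eq_zero.mp h]
    · intro x hx
      rw [interior_Iio] at hx
      have hx0 : x < 0 := hx
      rw [(rg_hasDerivAt c x hx0).deriv]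
      have hE : 0 < Real.exp (c * x - Real.exp (c * x)) := Real.exp_pos _
      have hden : (0 : ℝ) < 1 - x := by linarith
      have hcx : Real.exp (c * x) < 1 := by
        rw [Real.exp_lt_one_iff]
        exact mul_neg_of_pos_of_neg hc hx0
      have hnum : 0 < c * ((c - c * Real.exp (c * x)) * Real.exp (c * x - Real.exp (c * x))) * (1 - x)
          - c * Real.exp (c * x - Real.exp (c * x)) * (-1) := by
        have h1 : 0 < c - c * Real.exp (c * x) := by nlinarith
        have t1 : 0 ≤ c * ((c - c * Real.exp (c * x)) * Real.exp (c * x - Real.exp (c * x))) * (1 - x) :=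
          mul_nonneg (mul_nonneg hc.le (mul_nonneg h1.le hE.le)) hden.le
        have t2 : 0 < c * Real.exp (c * x - Real.exp (c * x)) := mul_pos hc hE
        nlinarith
      positivity
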